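/- arXiv:1112.5346 — 2 statements merged into one kernel-verified Lean document; each statement's English description precedes it below -/
import Mathlib

section
/- Let ω ∈ (0,1), h > 0, σ < 0 with 2 + σh² > 0, and β ≥ 0, and set σ̃ = σ(1+βi). The θ = 0 value of the weighted Jacobi Fourier symbol satisfies |1 - ω + 2ω/(2+σ̃h²)| ≤ 1 if and only if β ≥ √(4/((ω-2)σh²) - 1), provided the quantity under the square root is nonnegative. -/
/-!
Writing the symbol as `((1 - ω) D + 2ω) / D` with `D = 2 + σ̃h²`, the bound `|S̃(0)| ≤ 1` is
`‖(1 - ω) D + 2ω‖² ≤ ‖D‖²`. Expanding, the difference of the two sides is `ω` times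
`(2 - ω)‖D‖² - 4((1 - ω) Re D + ω)`, and for `D = 2 + s(1 + βi)` with `s = σh² < 0` this equals
`-s ((2 - ω)(-s)(1 + β²) - 4)`. Hence the bound holds iff `4 ≤ (ω - 2)σh² (1 + β²)`.
-/

open Complex

lemma norm_one_sub_add_div_le_one_iff {ω : ℝ} {z : ℂ} (hω : 0 < ω) (hz : z ≠ 0) :
    ‖1 - (ω : ℂ) + 2 * ω / z‖ ≤ 1 ↔ 4 * ((1 - ω) * z.re + ω) ≤ (2 - ω) * normSq z := by
  have hsymbol : 1 - (ω : ℂ) + 2 * ω / z = ((1 - ω) * z + 2 * ω) / z := by field_simp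
  have hnormSq : normSq ((1 - ω) * z + 2 * ω) =
      normSq z - ω * ((2 - ω) * normSq z - 4 * ((1 - ω) * z.re + ω)) := by
    simp only [normSq_apply, add_re, add_im, mul_re, mul_im, sub_re, sub_im, one_re, one_im,
      ofReal_re, ofReal_im, re_ofNat, im_ofNat]
    ring
  rw [hsymbol, norm_div, div_le_one (norm_pos_iff.mpr hz),
    ← sq_le_sq₀ (norm_nonneg _) (norm_nonneg _), Complex.sq_norm, Complex.sq_norm, hnormSq,
    sub_le_self_iff, mul_nonneg_iff_of_pos_left hω, sub_nonneg]

lemma norm_jacobi_symbol_le_one_iff {ω s β : ℝ} (hω : 0 < ω) (hs : s < 0) (hs2 : 0 < 2 + s) :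
    ‖1 - (ω : ℂ) + 2 * ω / (2 + s * (1 + β * I))‖ ≤ 1 ↔ 4 ≤ (2 - ω) * -s * (1 + β ^ 2) := by
  have hre : (2 + s * (1 + β * I)).re = 2 + s := by simp
  have hD : (2 + s * (1 + β * I)) ≠ 0 := fun h ↦ by
    have := congrArg re h
    rw [hre, zero_re] at this
    linarith
  have hnormSq : (2 - ω) * normSq (2 + s * (1 + β * I)) - 4 * ((1 - ω) * (2 + s) + ω) =
      -s * ((2 - ω) * -s * (1 + β ^ 2) - 4) := by
    simp only [normSq_apply, hre, add_im, mul_im, mul_re, ofReal_re, ofReal_im, one_re, one_im,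
      add_re, I_re, I_im, im_ofNat]
    ring
  rw [norm_one_sub_add_div_le_one_iff hω hD, hre, ← sub_nonneg, hnormSq,
    mul_nonneg_iff_of_pos_left (neg_pos.mpr hs), sub_nonneg]

lemma sqrt_four_div_sub_one_le_iff {k β : ℝ} (hk : 0 < k) (hβ : 0 ≤ β) :
    √(4 / k - 1) ≤ β ↔ 4 ≤ k * (1 + β ^ 2) := by
  rw [Real.sqrt_le_left hβ, sub_le_iff_le_add', div_le_iff₀ hk, mul_comm]

theorem stmt8_general (ω h σ β : ℝ) (hω : ω ∈ Set.Ioo (0 : ℝ) 1) (hh : 0 < h) (hσ : σ < 0)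
    (hpos : 0 < 2 + σ * h ^ 2) (hβ : 0 ≤ β) :
    ‖(1 - (ω : ℂ) + 2 * (ω : ℂ) /
        (2 + ((σ : ℂ) * (1 + β * Complex.I)) * (h : ℂ) ^ 2))‖ ≤ 1 ↔
      Real.sqrt (4 / ((ω - 2) * σ * h ^ 2) - 1) ≤ β := by
  have hs : σ * h ^ 2 < 0 := mul_neg_of_neg_of_pos hσ (by positivity)
  have hD : (2 : ℂ) + σ * (1 + β * I) * h ^ 2 = 2 + ((σ * h ^ 2 : ℝ) : ℂ) * (1 + β * I) := by
    push_cast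
    ring
  have hk : (ω - 2) * σ * h ^ 2 = (2 - ω) * -(σ * h ^ 2) := by ring
  rw [hD, norm_jacobi_symbol_le_one_iff hω.1 hs hpos, hk,
    sqrt_four_div_sub_one_le_iff (mul_pos (by linarith [hω.2]) (neg_pos.mpr hs)) hβ]

theorem stmt8 (ω h σ β : ℝ) (hω : ω ∈ Set.Ioo (0 : ℝ) 1) (hh : 0 < h) (hσ : σ < 0)
    (hpos : 0 < 2 + σ * h ^ 2) (hβ : 0 ≤ β)
    (hrad : 0 ≤ 4 / ((ω - 2) * σ * h ^ 2) - 1) :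
    ‖(1 - (ω : ℂ) + 2 * (ω : ℂ) /
        (2 + ((σ : ℂ) * (1 + β * Complex.I)) * (h : ℂ) ^ 2))‖ ≤ 1 ↔
      Real.sqrt (4 / ((ω - 2) * σ * h ^ 2) - 1) ≤ β :=
  stmt8_general ω h σ β hω hh hσ hpos hβ
end

section
/- Let ω ∈ (0,1), h > 0, σ < 0 and β ≥ 0 with σ̃ = σ(1+βi). The θ = π value of the weighted Jacobi Fourier symbol satisfies |1 - ω - 2ω/(2+σ̃h²)| ≤ 1 if and only if β² ≥ -(ω(4+σh²)² - 2(2+σh²)(4+σh²)) / ((ω-2)(σh²)²), provided the right-hand side is nonnegative. -/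
/-!
Write the symbol as `1 - ω z` with `z = (D + 2) / D`, `D = 2 + σ̃h²`. For `ω > 0` the disc
condition `|1 - ω z| ≤ 1` is `ω |z|² ≤ 2 Re z`, i.e. `ω |D + 2|² ≤ 2 (|D|² + 2 Re D)` after
clearing `|D|²`. With `s = σh²` both sides are affine in `β²` (through `|Im D|² = s²β²`), and
solving for `β²` divides by `(ω - 2) s² < 0`, which produces the stated threshold.
-/

open Complex

theorem norm_one_sub_ofReal_mul_le_one_iff {ω : ℝ} (hω : 0 < ω) (z : ℂ) :
    ‖1 - ω * z‖ ≤ 1 ↔ ω * normSq z ≤ 2 * z.re := by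
  have hexpand : normSq (1 - ω * z) = 1 - ω * (2 * z.re - ω * normSq z) := by
    simp only [normSq_apply, sub_re, sub_im, one_re, one_im, mul_re, mul_im, ofReal_re,
      ofReal_im]
    ring
  rw [← sq_le_one_iff₀ (norm_nonneg _), Complex.sq_norm, hexpand, sub_le_self_iff,
    mul_nonneg_iff_of_pos_left hω, sub_nonneg]

theorem norm_one_sub_sub_div_le_one_iff {ω : ℝ} (hω : 0 < ω) {D : ℂ} (hD : D ≠ 0) :
    ‖1 - ω - 2 * ω / D‖ ≤ 1 ↔ ω * normSq (D + 2) ≤ 2 * (normSq D + 2 * D.re) := by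
  have hrw : 1 - ω - 2 * ω / D = 1 - ω * (1 + 2 / D) := by ring
  have hn : 0 < normSq D := normSq_pos.mpr hD
  have hsq : normSq (1 + 2 / D) = normSq (D + 2) / normSq D := by
    rw [← normSq_div, add_div, div_self hD]
  have hre : (1 + 2 / D).re = (normSq D + 2 * D.re) / normSq D := by
    rw [add_re, one_re, div_re, re_ofNat, im_ofNat, zero_mul, zero_div, add_zero]
    field_simp
  rw [hrw, norm_one_sub_ofReal_mul_le_one_iff hω, hsq, hre, mul_div_assoc', mul_div_assoc',
    div_le_div_iff_of_pos_right hn]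

theorem stmt9_general (ω h σ β : ℝ) (hω : ω ∈ Set.Ioo (0 : ℝ) 1) (hh : 0 < h) (hσ : σ < 0)
    (hden : (2 : ℂ) + ((σ : ℂ) * (1 + β * Complex.I)) * (h : ℂ) ^ 2 ≠ 0) :
    ‖1 - (ω : ℂ) - 2 * (ω : ℂ) /
        (2 + ((σ : ℂ) * (1 + β * Complex.I)) * (h : ℂ) ^ 2)‖ ≤ 1 ↔
      -(ω * (4 + σ * h ^ 2) ^ 2 - 2 * (2 + σ * h ^ 2) * (4 + σ * h ^ 2)) /
          ((ω - 2) * (σ * h ^ 2) ^ 2) ≤ β ^ 2 := by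
  set s := σ * h ^ 2
  have hs : s < 0 := mul_neg_of_neg_of_pos hσ (pow_pos hh 2)
  have hscale : (ω - 2) * s ^ 2 < 0 :=
    mul_neg_of_neg_of_pos (by linarith [hω.2]) (sq_pos_of_neg hs)
  have hD : (2 : ℂ) + ((σ : ℂ) * (1 + β * I)) * (h : ℂ) ^ 2 =
      ((2 + s : ℝ) : ℂ) + ((s * β : ℝ) : ℂ) * I := by
    simp only [s]; push_cast; ring
  have hD2 : ((2 + s : ℝ) : ℂ) + ((s * β : ℝ) : ℂ) * I + 2 =
      ((4 + s : ℝ) : ℂ) + ((s * β : ℝ) : ℂ) * I := by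
    push_cast; ring
  rw [norm_one_sub_sub_div_le_one_iff hω.1 hden, hD, hD2, normSq_add_mul_I, normSq_add_mul_I,
    add_re, ofReal_re, re_ofReal_mul, I_re, div_le_iff_of_neg hscale]
  constructor <;> intro <;> linarith

theorem stmt9 (ω h σ β : ℝ) (hω : ω ∈ Set.Ioo (0 : ℝ) 1) (hh : 0 < h) (hσ : σ < 0) (hβ : 0 ≤ β)
    (hden : (2 : ℂ) + ((σ : ℂ) * (1 + β * Complex.I)) * (h : ℂ) ^ 2 ≠ 0)
    (hrad : 0 ≤ -(ω * (4 + σ * h ^ 2) ^ 2 - 2 * (2 + σ * h ^ 2) * (4 + σ * h ^ 2)) /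
        ((ω - 2) * (σ * h ^ 2) ^ 2)) :
    ‖1 - (ω : ℂ) - 2 * (ω : ℂ) /
        (2 + ((σ : ℂ) * (1 + β * Complex.I)) * (h : ℂ) ^ 2)‖ ≤ 1 ↔
      -(ω * (4 + σ * h ^ 2) ^ 2 - 2 * (2 + σ * h ^ 2) * (4 + σ * h ^ 2)) /
          ((ω - 2) * (σ * h ^ 2) ^ 2) ≤ β ^ 2 :=
  stmt9_general ω h σ β hω hh hσ hden
end
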